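/- If σ₁,...,σₙ and σ'₁,...,σ'ₘ are both splittings of a finite set T of propositional formulas, then the collection of nonempty intersections σᵢ ∩ σ'ⱼ is again a splitting of T. -/

import Mathlib

inductive PropForm : Type where
  | var : ℕ → PropForm
  | tru : PropForm
  | fls : PropForm
  | neg : PropForm → PropForm
  | conj : PropForm → PropForm → PropForm
  | disj : PropForm → PropForm → PropForm
deriving DecidableEq

namespace PropForm

def eval (v : ℕ → Bool) : PropForm → Bool
  | var p => v p
  | tru => true
  | fls => false
  | neg φ => !(eval v φ)
  | conj φ ψ => eval v φ && eval v ψ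
  | disj φ ψ => eval v φ || eval v ψ

def sig : PropForm → Finset ℕ
  | var p => {p}
  | tru => ∅
  | fls => ∅
  | neg φ => sig φ
  | conj φ ψ => sig φ ∪ sig ψ
  | disj φ ψ => sig φ ∪ sig ψ

def impl (φ ψ : PropForm) : PropForm := disj (neg φ) ψ

def iff (φ ψ : PropForm) : PropForm := conj (impl φ ψ) (impl ψ φ)

end PropForm

/-- Semantic entailment: every model of `φ` is a model of `ψ`. -/
def Entails (φ ψ : PropForm) : Prop :=
  ∀ v : ℕ → Bool, φ.eval v = true → ψ.eval v = true

/-- Conjunction of a list of formulas. -/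
def bigConj (l : List PropForm) : PropForm := l.foldr PropForm.conj PropForm.tru

/-- Signature of a finite set (list) of formulas. -/
def sigT (T : List PropForm) : Finset ℕ := T.foldr (fun φ s => φ.sig ∪ s) ∅

/-- `P` is a partition of the finite set `s` of atoms. -/
def IsPartition (P : Finset (Finset ℕ)) (s : Finset ℕ) : Prop :=
  (∀ b ∈ P, b.Nonempty) ∧
  (∀ b ∈ P, ∀ c ∈ P, b ≠ c → b ∩ c = ∅) ∧
  P.biUnion id = s

/-- Logical equivalence of formulas. -/
def PropEquiv (φ ψ : PropForm) : Prop := ∀ v : ℕ → Bool, φ.eval v = ψ.eval v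

/-- `P` is a splitting of `T`: a partition of `sig(T)` admitting an axiomatisation of
`T` by formulas whose signatures are contained in the respective blocks. -/
def IsSplitting (P : Finset (Finset ℕ)) (T : List PropForm) : Prop :=
  IsPartition P (sigT T) ∧
  ∃ χ : Finset ℕ → PropForm,
    (∀ b ∈ P, (χ b).sig ⊆ b) ∧
    PropEquiv (bigConj (P.toList.map χ)) (bigConj T)

/-- `P` is at least as fine as `Q`: every block of `Q` contains some block of `P`. -/
def Finer (P Q : Finset (Finset ℕ)) : Prop := ∀ b ∈ Q, ∃ c ∈ P, c ⊆ b

/-!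
Axiomatise each block `d` of the common refinement by the strongest consequence of `T` over `d`,
namely `T` with every atom outside `d` existentially forgotten. Let `v` satisfy all these axioms and
fix a block `b` of the first splitting. For every block `c` of the second splitting some model of
`T` agrees with `v` on `b ∩ c`. Since `T` is axiomatised blockwise along the second splitting, these
models glue, together with `v` on `b`, to a model `u` of `T`. As `u` agrees with `v` on `b`, `v`
satisfies the axiom of `b` in the first splitting; `b` being arbitrary, `v` is a model of `T`.
-/

namespace PropForm

theorem eval_congr {v w : ℕ → Bool} (φ : PropForm) (h : ∀ x ∈ sig φ, v x = w x) :
    eval v φ = eval w φ := by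
  induction φ with
  | var q => exact h q (Finset.mem_singleton_self _)
  | tru | fls => rfl
  | neg φ ih => simp only [eval, ih h]
  | conj φ ψ ih₁ ih₂ | disj φ ψ ih₁ ih₂ =>
    simp only [eval, ih₁ fun x hx => h x (Finset.mem_union_left _ hx),
      ih₂ fun x hx => h x (Finset.mem_union_right _ hx)]

def subst (p : ℕ) (b : Bool) : PropForm → PropForm
  | var q => if q = p then (if b then tru else fls) else var q
  | tru => tru
  | fls => fls
  | neg φ => neg (subst p b φ)
  | conj φ ψ => conj (subst p b φ) (subst p b ψ)
  | disj φ ψ => disj (subst p b φ) (subst p b ψ)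

theorem eval_subst (v : ℕ → Bool) (p : ℕ) (b : Bool) (φ : PropForm) :
    eval v (subst p b φ) = eval (Function.update v p b) φ := by
  induction φ with
  | var q =>
    by_cases h : q = p
    · subst h; cases b <;> simp [subst, eval]
    · simp [subst, eval, h]
  | tru | fls => rfl
  | neg φ ih => simp [subst, eval, ih]
  | conj φ ψ ih₁ ih₂ | disj φ ψ ih₁ ih₂ => simp [subst, eval, ih₁, ih₂]

theorem sig_subst (p : ℕ) (b : Bool) (φ : PropForm) : sig (subst p b φ) ⊆ (sig φ).erase p := by
  induction φ with
  | var q =>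
    by_cases h : q = p
    · subst h; cases b <;> simp [subst, sig]
    · simp [subst, sig, h]
  | tru | fls => simp [subst, sig]
  | neg φ ih => simpa [subst, sig] using ih
  | conj φ ψ ih₁ ih₂ | disj φ ψ ih₁ ih₂ =>
    simp only [subst, sig, Finset.erase_union_distrib]
    exact Finset.union_subset_union ih₁ ih₂

def forget (p : ℕ) (φ : PropForm) : PropForm := disj (subst p true φ) (subst p false φ)

theorem eval_forget (v : ℕ → Bool) (p : ℕ) (φ : PropForm) :
    eval v (forget p φ) = true ↔ ∃ b, eval (Function.update v p b) φ = true := by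
  simp only [forget, eval, Bool.or_eq_true, eval_subst, Bool.exists_bool]
  exact or_comm

theorem sig_forget (p : ℕ) (φ : PropForm) : sig (forget p φ) ⊆ (sig φ).erase p :=
  Finset.union_subset (sig_subst _ _ _) (sig_subst _ _ _)

def forgetList (l : List ℕ) (φ : PropForm) : PropForm := l.foldr forget φ

theorem eval_forgetList (l : List ℕ) (φ : PropForm) (v : ℕ → Bool) :
    eval v (forgetList l φ) = true ↔ ∃ w, (∀ x ∉ l, w x = v x) ∧ eval w φ = true := by
  induction l generalizing v with
  | nil =>
    refine ⟨fun h => ⟨v, fun _ _ => rfl, h⟩, fun ⟨w, hw, h⟩ => ?_⟩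
    rwa [forgetList, List.foldr_nil, eval_congr φ fun x _ => (hw x List.not_mem_nil).symm]
  | cons p l ih =>
    rw [forgetList, List.foldr_cons, eval_forget]
    constructor
    · rintro ⟨b, hb⟩
      obtain ⟨w, hwv, hw⟩ := (ih _).1 hb
      refine ⟨w, fun x hx => ?_, hw⟩
      rw [List.mem_cons, not_or] at hx
      rw [hwv x hx.2, Function.update_of_ne hx.1]
    · rintro ⟨w, hwv, hw⟩
      refine ⟨w p, (ih _).2 ⟨w, fun x hx => ?_, hw⟩⟩
      by_cases hxp : x = p
      · subst hxp; rw [Function.update_self]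
      · rw [Function.update_of_ne hxp]
        exact hwv x (by simp [hxp, hx])

theorem sig_forgetList (l : List ℕ) (φ : PropForm) {x : ℕ} (hx : x ∈ sig (forgetList l φ)) :
    x ∈ sig φ ∧ x ∉ l := by
  induction l with
  | nil => exact ⟨hx, List.not_mem_nil⟩
  | cons p l ih =>
    obtain ⟨hxp, hxl⟩ := Finset.mem_erase.1 (sig_forget p (forgetList l φ) hx)
    obtain ⟨hxφ, hxl⟩ := ih hxl
    exact ⟨hxφ, by simp [hxp, hxl]⟩

/-- The uniform interpolant of `φ` over `d`, i.e. its strongest consequence in the atoms `d`. -/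
noncomputable def proj (φ : PropForm) (d : Finset ℕ) : PropForm :=
  forgetList (φ.sig \ d).toList φ

theorem sig_proj (φ : PropForm) (d : Finset ℕ) : sig (proj φ d) ⊆ d := fun x hx => by
  obtain ⟨hxφ, hxd⟩ := sig_forgetList _ φ hx
  by_contra hx
  exact hxd (Finset.mem_toList.2 (Finset.mem_sdiff.2 ⟨hxφ, hx⟩))

theorem eval_proj (φ : PropForm) (d : Finset ℕ) (v : ℕ → Bool) :
    eval v (proj φ d) = true ↔ ∃ w, (∀ x ∈ d, w x = v x) ∧ eval w φ = true := by
  classical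
  rw [proj, eval_forgetList]
  simp only [Finset.mem_toList, Finset.mem_sdiff, not_and_not_right]
  constructor
  · rintro ⟨w, hwv, hw⟩
    exact ⟨w, fun x hx => hwv x fun _ => hx, hw⟩
  · rintro ⟨w, hwv, hw⟩
    -- `w` may be changed freely outside `sig φ`
    refine ⟨fun x => if x ∈ sig φ then w x else v x, fun x hx => ?_, ?_⟩
    · by_cases hxφ : x ∈ sig φ
      · simp only [hxφ, if_true, hwv x (hx hxφ)]
      · simp only [hxφ, if_false]
    · rwa [eval_congr φ fun x hx => if_pos hx]

end PropForm

theorem eval_bigConj (v : ℕ → Bool) (l : List PropForm) :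
    (bigConj l).eval v = true ↔ ∀ ψ ∈ l, ψ.eval v = true := by
  induction l with
  | nil => simp [bigConj, PropForm.eval]
  | cons a l ih =>
    rw [bigConj, List.foldr_cons, ← bigConj, PropForm.eval, Bool.and_eq_true, ih,
      List.forall_mem_cons]

theorem propEquiv_bigConj_map_iff (s : Finset (Finset ℕ)) (f : Finset ℕ → PropForm)
    (ψ : PropForm) :
    PropEquiv (bigConj (s.toList.map f)) ψ ↔
      ∀ v, (∀ b ∈ s, (f b).eval v = true) ↔ ψ.eval v = true := by
  refine forall_congr' fun v => ?_
  rw [Bool.eq_iff_iff, eval_bigConj]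
  simp only [List.forall_mem_map, Finset.mem_toList]

theorem IsSplitting.exists_axioms {P : Finset (Finset ℕ)} {T : List PropForm}
    (h : IsSplitting P T) :
    ∃ χ : Finset ℕ → PropForm, (∀ b ∈ P, (χ b).sig ⊆ b) ∧
      ∀ v, (bigConj T).eval v = true ↔ ∀ b ∈ P, (χ b).eval v = true := by
  obtain ⟨-, χ, hχ, hT⟩ := h
  exact ⟨χ, hχ, fun v => ((propEquiv_bigConj_map_iff P χ _).1 hT v).symm⟩

theorem eq_of_mem_of_mem_of_inter_eq_empty {P : Finset (Finset ℕ)}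
    (hdisj : ∀ b ∈ P, ∀ c ∈ P, b ≠ c → b ∩ c = ∅) {b c : Finset ℕ} (hb : b ∈ P) (hc : c ∈ P)
    {x : ℕ} (hxb : x ∈ b) (hxc : x ∈ c) : b = c := by
  by_contra hbc
  have hx : x ∈ b ∩ c := Finset.mem_inter.2 ⟨hxb, hxc⟩
  rw [hdisj b hb c hc hbc] at hx
  exact Finset.notMem_empty x hx

theorem exists_model_eqOn_of_forall_inter {P : Finset (Finset ℕ)} {φ : PropForm}
    {χ : Finset ℕ → PropForm} (hdisj : ∀ b ∈ P, ∀ c ∈ P, b ≠ c → b ∩ c = ∅)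
    (hχ : ∀ c ∈ P, (χ c).sig ⊆ c) (hφ : ∀ u, φ.eval u = true ↔ ∀ c ∈ P, (χ c).eval u = true)
    (b : Finset ℕ) (v : ℕ → Bool)
    (hw : ∀ c ∈ P, ∃ w, (∀ x ∈ b ∩ c, w x = v x) ∧ φ.eval w = true) :
    ∃ u, (∀ x ∈ b, u x = v x) ∧ φ.eval u = true := by
  classical
  choose! W hWv hWφ using hw
  let u : ℕ → Bool := fun x =>
    if x ∈ b then v x else if hx : ∃ c ∈ P, x ∈ c then W hx.choose x else v x
  have hu : ∀ c ∈ P, ∀ x ∈ c, u x = W c x := by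
    intro c hc x hxc
    by_cases hxb : x ∈ b
    · simp only [u, hxb, if_true, hWv c hc x (Finset.mem_inter.2 ⟨hxb, hxc⟩)]
    · have hx : ∃ c ∈ P, x ∈ c := ⟨c, hc, hxc⟩
      have hchoose : hx.choose = c :=
        eq_of_mem_of_mem_of_inter_eq_empty hdisj hx.choose_spec.1 hc hx.choose_spec.2 hxc
      simp only [u, hxb, if_false, dif_pos hx, hchoose]
  refine ⟨u, fun x hx => if_pos hx, (hφ u).2 fun c hc => ?_⟩
  rw [PropForm.eval_congr (χ c) fun x hx => hu c hc x (hχ c hc hx)]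
  exact (hφ (W c)).1 (hWφ c hc) c hc

def commonRefinement (P P' : Finset (Finset ℕ)) : Finset (Finset ℕ) :=
  ((P ×ˢ P').image fun q => q.1 ∩ q.2).filter fun b => b ≠ ∅

theorem mem_commonRefinement {P P' : Finset (Finset ℕ)} {d : Finset ℕ} :
    d ∈ commonRefinement P P' ↔ (∃ b ∈ P, ∃ c ∈ P', b ∩ c = d) ∧ d.Nonempty := by
  simp [commonRefinement, Finset.nonempty_iff_ne_empty, and_assoc]

theorem inter_mem_commonRefinement {P P' : Finset (Finset ℕ)} {b c : Finset ℕ} (hb : b ∈ P)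
    (hc : c ∈ P') (hbc : (b ∩ c).Nonempty) : b ∩ c ∈ commonRefinement P P' :=
  mem_commonRefinement.2 ⟨⟨b, hb, c, hc, rfl⟩, hbc⟩

theorem IsPartition.commonRefinement {P P' : Finset (Finset ℕ)} {s : Finset ℕ}
    (hP : IsPartition P s) (hP' : IsPartition P' s) :
    IsPartition (commonRefinement P P') s := by
  obtain ⟨-, hPdisj, hPun⟩ := hP
  obtain ⟨-, hP'disj, hP'un⟩ := hP'
  refine ⟨fun d hd => (mem_commonRefinement.1 hd).2, ?_, ?_⟩
  · intro d hd e he hde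
    obtain ⟨⟨b, hb, c, hc, rfl⟩, -⟩ := mem_commonRefinement.1 hd
    obtain ⟨⟨b', hb', c', hc', rfl⟩, -⟩ := mem_commonRefinement.1 he
    refine Finset.eq_empty_of_forall_notMem fun x hx => hde ?_
    simp only [Finset.mem_inter] at hx
    rw [eq_of_mem_of_mem_of_inter_eq_empty hPdisj hb hb' hx.1.1 hx.2.1,
      eq_of_mem_of_mem_of_inter_eq_empty hP'disj hc hc' hx.1.2 hx.2.2]
  · ext x
    simp only [Finset.mem_biUnion, id]
    constructor
    · rintro ⟨d, hd, hxd⟩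
      obtain ⟨⟨b, hb, c, -, rfl⟩, -⟩ := mem_commonRefinement.1 hd
      rw [← hPun]
      exact Finset.mem_biUnion.2 ⟨b, hb, (Finset.mem_inter.1 hxd).1⟩
    · intro hx
      obtain ⟨b, hb, hxb⟩ := Finset.mem_biUnion.1 (hPun ▸ hx)
      obtain ⟨c, hc, hxc⟩ := Finset.mem_biUnion.1 (hP'un ▸ hx)
      have hxbc : x ∈ b ∩ c := Finset.mem_inter.2 ⟨hxb, hxc⟩
      exact ⟨b ∩ c, inter_mem_commonRefinement hb hc ⟨x, hxbc⟩, hxbc⟩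

theorem IsSplitting.eval_of_forall_commonRefinement {P P' : Finset (Finset ℕ)}
    {T : List PropForm} (h : IsSplitting P T) (h' : IsSplitting P' T) (v : ℕ → Bool)
    (hv : ∀ d ∈ commonRefinement P P',
      ∃ w, (∀ x ∈ d, w x = v x) ∧ (bigConj T).eval w = true) :
    (bigConj T).eval v = true := by
  obtain ⟨χ, hχ, hT⟩ := h.exists_axioms
  obtain ⟨χ', hχ', hT'⟩ := h'.exists_axioms
  obtain ⟨⟨hPne, -, hPun⟩, -⟩ := h
  obtain ⟨⟨-, hP'disj, hP'un⟩, -⟩ := h'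
  rw [hT v]
  intro b hb
  obtain ⟨x₀, hx₀⟩ := hPne b hb
  obtain ⟨c₀, hc₀, hx₀c₀⟩ : ∃ c ∈ P', x₀ ∈ c := by
    have hx₀T : x₀ ∈ sigT T := hPun ▸ Finset.mem_biUnion.2 ⟨b, hb, hx₀⟩
    simpa [← hP'un] using hx₀T
  -- `T` is satisfiable, which covers the blocks `c` missing `b`
  obtain ⟨w₀, -, hw₀⟩ :=
    hv _ (inter_mem_commonRefinement hb hc₀ ⟨x₀, Finset.mem_inter.2 ⟨hx₀, hx₀c₀⟩⟩)
  obtain ⟨u, huv, hu⟩ := exists_model_eqOn_of_forall_inter hP'disj hχ' hT' b v fun c hc => by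
    by_cases hbc : (b ∩ c).Nonempty
    · exact hv _ (inter_mem_commonRefinement hb hc hbc)
    · exact ⟨w₀, by simp [Finset.not_nonempty_iff_eq_empty.1 hbc], hw₀⟩
  rw [PropForm.eval_congr (χ b) fun x hx => (huv x (hχ b hb hx)).symm]
  exact (hT u).1 hu b hb

/-- The nonempty pairwise intersections of two splittings of `T` again form a
splitting of `T`. -/
theorem splitting_intersection (T : List PropForm) (P P' : Finset (Finset ℕ))
    (h : IsSplitting P T) (h' : IsSplitting P' T) :
    IsSplitting (((P ×ˢ P').image fun q => q.1 ∩ q.2).filter fun b => b ≠ ∅) T := by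
  refine ⟨h.1.commonRefinement h'.1, (bigConj T).proj, fun d _ => PropForm.sig_proj _ d, ?_⟩
  refine (propEquiv_bigConj_map_iff _ _ _).2 fun v => ⟨fun hv => ?_, fun hv d _ => ?_⟩
  · exact h.eval_of_forall_commonRefinement h' v fun d hd => (PropForm.eval_proj _ d v).1 (hv d hd)
  · exact (PropForm.eval_proj _ d v).2 ⟨v, fun _ _ => rfl, hv⟩
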